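/- Let E be a normed vector space over ℂ and let F : E → ℝ be continuous. Define the time average along the rotation flow ⟨F⟩(z) := (1/2π)∫₀^{2π} F(e^{−is}·z) ds, the fluctuation F̂ := F − ⟨F⟩, and G(z) := (1/2π)∫₀^{2π} s·F̂(e^{−is}·z) ds. Then: (i) ⟨G⟩ = 0, i.e. (1/2π)∫₀^{2π} G(e^{−is}·z) ds = 0 for every z ∈ E; and (ii) for every z ∈ E, the function θ ↦ G(e^{−iθ}·z) is differentiable at θ = 0 with derivative equal to F̂(z). In other words, G solves the homological equation L_h G = F̂ for the Lie derivative L_h along the 2π-periodic rotation flow z ↦ e^{−is}·z. -/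

import Mathlib

/-!
Along the orbit of `z` the fluctuation is a continuous `2π`-periodic function `g` of time with
mean zero, and `G` along the orbit is `θ ↦ (1/2π) ∫₀^{2π} s g(s + θ) ds`. Substituting
`u = s + θ` turns this into `(1/2π) ∫_θ^{θ+2π} u g(u) du`, because `g` has mean zero over every
period; its derivative is `(1/2π)((θ + 2π) g(θ + 2π) - θ g(θ)) = g(θ)`. Integrating by parts
against `θ` then gives `∫₀^{2π} G = 2π G(2π) - ∫₀^{2π} θ g(θ) dθ`, which vanishes since `G` is
periodic and `2π G(0) = ∫₀^{2π} θ g(θ) dθ`.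
-/

noncomputable section

open MeasureTheory

variable {E : Type*} [NormedAddCommGroup E] [NormedSpace ℂ E]

/-- Time average of F along the rotation flow z ↦ e^{−is}z. -/
def avgRot (F : E → ℝ) (z : E) : ℝ :=
  (1 / (2 * Real.pi)) *
    ∫ s in (0 : ℝ)..(2 * Real.pi), F (Complex.exp (-(Complex.I * s)) • z)

/-- The fluctuation F̂ = F − ⟨F⟩. -/
def fluct (F : E → ℝ) (z : E) : ℝ :=
  F z - avgRot F z

/-- The solution G = L_h^{−1}F̂ of the homological equation, given by the
time average of F̂ weighted by time along the rotation flow. -/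
def Gsol (F : E → ℝ) (z : E) : ℝ :=
  (1 / (2 * Real.pi)) *
    ∫ s in (0 : ℝ)..(2 * Real.pi), s * fluct F (Complex.exp (-(Complex.I * s)) • z)

open Function

section MeanZeroPrimitive

variable {g : ℝ → ℝ} {T : ℝ}

def meanZeroPrimitive (g : ℝ → ℝ) (T θ : ℝ) : ℝ :=
  1 / T * ∫ s in (0 : ℝ)..T, s * g (s + θ)

theorem Function.Periodic.meanZeroPrimitive (hg : Periodic g T) :
    Periodic (meanZeroPrimitive g T) T := fun θ => by
  unfold _root_.meanZeroPrimitive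
  congr 2 with s
  rw [← add_assoc, hg]

theorem integral_mul_comp_add_right_of_integral_eq_zero (hg : Continuous g) (hper : Periodic g T)
    (hmean : ∫ s in (0 : ℝ)..T, g s = 0) (θ : ℝ) :
    ∫ s in (0 : ℝ)..T, s * g (s + θ) =
      (∫ u in (0 : ℝ)..θ + T, u * g u) - ∫ u in (0 : ℝ)..θ, u * g u := by
  have hid : Continuous fun u => u * g u := continuous_id.mul hg
  have hshift : ∫ u in θ..θ + T, g u = 0 := by
    rw [hper.intervalIntegral_add_eq θ 0, zero_add, hmean]
  calc ∫ s in (0 : ℝ)..T, s * g (s + θ)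
      = ∫ s in (0 : ℝ)..T, (fun u => u * g u - θ * g u) (s + θ) := by
        congr 1 with s; ring
    _ = (∫ u in θ..θ + T, u * g u) - θ * ∫ u in θ..θ + T, g u := by
        rw [intervalIntegral.integral_comp_add_right (fun u => u * g u - θ * g u), zero_add,
          add_comm T, intervalIntegral.integral_sub (hid.intervalIntegrable _ _)
            ((hg.intervalIntegrable _ _).const_mul θ),
          intervalIntegral.integral_const_mul]
    _ = _ := by
        rw [hshift, mul_zero, sub_zero,
          intervalIntegral.integral_interval_sub_left (hid.intervalIntegrable _ _)
            (hid.intervalIntegrable _ _)]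

theorem hasDerivAt_meanZeroPrimitive (hg : Continuous g) (hper : Periodic g T)
    (hmean : ∫ s in (0 : ℝ)..T, g s = 0) (hT : T ≠ 0) (θ : ℝ) :
    HasDerivAt (meanZeroPrimitive g T) (g θ) θ := by
  have hΦ (x : ℝ) : HasDerivAt (fun x => ∫ u in (0 : ℝ)..x, u * g u) (x * g x) x :=
    ((continuous_id.mul hg).integral_hasStrictDerivAt 0 x).hasDerivAt
  have hdiff := ((hΦ (θ + T)).comp_add_const θ T).sub (hΦ θ) |>.const_mul (1 / T)
  have hG : meanZeroPrimitive g T =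
      fun θ => 1 / T * ((∫ u in (0 : ℝ)..θ + T, u * g u) - ∫ u in (0 : ℝ)..θ, u * g u) :=
    funext fun θ => congrArg _ (integral_mul_comp_add_right_of_integral_eq_zero hg hper hmean θ)
  rw [hG]
  refine hdiff.congr_deriv ?_
  rw [hper]
  field_simp
  ring

theorem integral_meanZeroPrimitive (hg : Continuous g) (hper : Periodic g T)
    (hmean : ∫ s in (0 : ℝ)..T, g s = 0) (hT : T ≠ 0) :
    ∫ θ in (0 : ℝ)..T, meanZeroPrimitive g T θ = 0 := by
  have hG := hasDerivAt_meanZeroPrimitive hg hper hmean hT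
  have hparts := intervalIntegral.integral_mul_deriv_eq_deriv_mul (a := 0) (b := T)
    (fun θ _ => hasDerivAt_id θ) (fun θ _ => hG θ) intervalIntegrable_const
    (hg.intervalIntegrable _ _)
  have hend : T * meanZeroPrimitive g T T = ∫ θ in (0 : ℝ)..T, θ * g θ := by
    rw [hper.meanZeroPrimitive.eq, meanZeroPrimitive]
    simp only [add_zero]
    field_simp
  simp only [id, one_mul, zero_mul, sub_zero, hend] at hparts
  linarith

end MeanZeroPrimitive

section RotationFlow

theorem periodic_exp_neg_I_mul :
    Periodic (fun s : ℝ => Complex.exp (-(Complex.I * s))) (2 * Real.pi) := fun s => by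
  dsimp only
  rw [← Complex.exp_periodic.sub_eq (-(Complex.I * s))]
  push_cast
  ring_nf

theorem exp_neg_I_mul_smul_exp_neg_I_mul_smul (z : E) (s θ : ℝ) :
    Complex.exp (-(Complex.I * s)) • Complex.exp (-(Complex.I * θ)) • z =
      Complex.exp (-(Complex.I * ((s + θ : ℝ) : ℂ))) • z := by
  rw [smul_smul, ← Complex.exp_add]
  push_cast
  ring_nf

theorem avgRot_exp_neg_I_mul_smul (F : E → ℝ) (z : E) (θ : ℝ) :
    avgRot F (Complex.exp (-(Complex.I * θ)) • z) = avgRot F z := by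
  have hper : Periodic (fun s : ℝ => F (Complex.exp (-(Complex.I * s)) • z)) (2 * Real.pi) :=
    fun s => by simp only [periodic_exp_neg_I_mul s]
  unfold avgRot
  simp only [exp_neg_I_mul_smul_exp_neg_I_mul_smul]
  rw [intervalIntegral.integral_comp_add_right (fun s : ℝ => F (Complex.exp (-(Complex.I * s)) • z)),
    zero_add, add_comm, hper.intervalIntegral_add_eq θ 0, zero_add]

variable {F : E → ℝ}

theorem continuous_fluct_exp_neg_I_mul_smul (hF : Continuous F) (z : E) :
    Continuous fun s : ℝ => fluct F (Complex.exp (-(Complex.I * s)) • z) := by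
  simp only [fluct, avgRot_exp_neg_I_mul_smul]
  fun_prop

theorem periodic_fluct_exp_neg_I_mul_smul (F : E → ℝ) (z : E) :
    Periodic (fun s : ℝ => fluct F (Complex.exp (-(Complex.I * s)) • z)) (2 * Real.pi) :=
  fun s => by simp only [periodic_exp_neg_I_mul s]

theorem integral_fluct_exp_neg_I_mul_smul (hF : Continuous F) (z : E) :
    ∫ s in (0 : ℝ)..2 * Real.pi, fluct F (Complex.exp (-(Complex.I * s)) • z) = 0 := by
  have horbit : Continuous fun s : ℝ => F (Complex.exp (-(Complex.I * s)) • z) := by fun_prop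
  simp only [fluct, avgRot_exp_neg_I_mul_smul]
  rw [intervalIntegral.integral_sub (horbit.intervalIntegrable _ _) intervalIntegrable_const,
    intervalIntegral.integral_const, avgRot, smul_eq_mul, sub_zero]
  field_simp
  ring

theorem Gsol_exp_neg_I_mul_smul (F : E → ℝ) (z : E) (θ : ℝ) :
    Gsol F (Complex.exp (-(Complex.I * θ)) • z) =
      meanZeroPrimitive (fun s : ℝ => fluct F (Complex.exp (-(Complex.I * s)) • z))
        (2 * Real.pi) θ := by
  simp only [Gsol, meanZeroPrimitive, exp_neg_I_mul_smul_exp_neg_I_mul_smul]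

end RotationFlow

/-- G has zero average along the rotation flow and solves the
homological equation L_h G = F̂. -/
theorem homological_equation_solution
    (F : E → ℝ) (hF : Continuous F) :
    (∀ z : E,
      (1 / (2 * Real.pi)) *
        ∫ s in (0 : ℝ)..(2 * Real.pi), Gsol F (Complex.exp (-(Complex.I * s)) • z) = 0) ∧
    (∀ z : E,
      HasDerivAt (fun θ : ℝ => Gsol F (Complex.exp (-(Complex.I * θ)) • z))
        (fluct F z) 0) := by
  refine ⟨fun z => ?_, fun z => ?_⟩
  · simp only [Gsol_exp_neg_I_mul_smul,
      integral_meanZeroPrimitive (continuous_fluct_exp_neg_I_mul_smul hF z)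
        (periodic_fluct_exp_neg_I_mul_smul F z) (integral_fluct_exp_neg_I_mul_smul hF z)
        Real.two_pi_pos.ne', mul_zero]
  · have hG := hasDerivAt_meanZeroPrimitive (continuous_fluct_exp_neg_I_mul_smul hF z)
      (periodic_fluct_exp_neg_I_mul_smul F z) (integral_fluct_exp_neg_I_mul_smul hF z)
      Real.two_pi_pos.ne' 0
    simp only [Gsol_exp_neg_I_mul_smul]
    simpa only [Complex.ofReal_zero, mul_zero, neg_zero,
      Complex.exp_zero, one_smul] using hG
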